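/- arXiv:math/0605261 — 5 statements merged into one kernel-verified Lean document; each statement's English description precedes it below -/
import Mathlib

section
/- Let H be a real inner product space, let u, v ∈ H with v ≠ 0, and let χ ∈ [0,1]. Then ‖u‖² + χ·(‖u‖/‖v‖)·⟨u,v⟩ ≥ (1/2)·min_{θ∈[0,1]} ‖θv + (1−θ)u‖². -/
theorem stmt_0 {H : Type*} [NormedAddCommGroup H] [InnerProductSpace ℝ H]
    (u v : H) (hv : v ≠ 0) (χ : ℝ) (hχ : χ ∈ Set.Icc (0:ℝ) 1) :
    ‖u‖ ^ 2 + χ * (‖u‖ / ‖v‖) * inner ℝ u v ≥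
      (1 / 2) * sInf ((fun θ : ℝ => ‖θ • v + (1 - θ) • u‖ ^ 2) '' Set.Icc (0:ℝ) 1) := by
  set S := ((fun θ : ℝ => ‖θ • v + (1 - θ) • u‖ ^ 2) '' Set.Icc (0:ℝ) 1) with hS
  have hbdd : BddBelow S := by
    refine ⟨0, ?_⟩
    rintro x ⟨θ, _, rfl⟩
    positivity
  have hne : S.Nonempty := ⟨_, ⟨0, by norm_num, rfl⟩⟩
  set a := ‖u‖ with ha
  set b := ‖v‖ with hb
  have hb0 : 0 < b := norm_pos_iff.mpr hv
  have ha0 : 0 ≤ a := norm_nonneg u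
  set t : ℝ := inner ℝ u v with ht
  have hcs : |t| ≤ a * b := abs_real_inner_le_norm u v
  have hval0 : ((fun θ : ℝ => ‖θ • v + (1 - θ) • u‖ ^ 2) 0) = a ^ 2 := by simp [ha]
  have hvalgen : ∀ θ : ℝ, 0 ≤ θ → θ ≤ 1 → ‖θ • v + (1 - θ) • u‖ ^ 2
      = θ ^ 2 * b ^ 2 + 2 * (θ * (1 - θ) * t) + (1 - θ) ^ 2 * a ^ 2 := by
    intro θ h0 h1
    rw [norm_add_sq_real, norm_smul, norm_smul]
    have hinner : (inner ℝ (θ • v) ((1 - θ) • u) : ℝ) = θ * (1 - θ) * t := by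
      rw [real_inner_smul_left, real_inner_smul_right, real_inner_comm]; ring
    rw [hinner, Real.norm_eq_abs, Real.norm_eq_abs, abs_of_nonneg h0,
      abs_of_nonneg (by linarith : (0:ℝ) ≤ 1 - θ)]
    ring
  clear_value a b t
  obtain ⟨hχ0, hχ1⟩ := hχ
  by_cases htpos : 0 ≤ t
  · have h1 : sInf S ≤ a ^ 2 := by
      have : ((fun θ : ℝ => ‖θ • v + (1 - θ) • u‖ ^ 2) 0) ∈ S :=
        ⟨0, by norm_num, rfl⟩
      exact hval0 ▸ csInf_le hbdd this
    have h2 : (0:ℝ) ≤ sInf S := le_csInf hne (by rintro x ⟨θ, _, rfl⟩; positivity)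
    have h3 : 0 ≤ χ * (a / b) * t := by positivity
    nlinarith
  · push_neg at htpos
    set c := a + b with hc
    have hc0 : 0 < c := by rw [hc]; positivity
    clear_value c
    set θ₀ := a / c with hθ₀
    clear_value θ₀
    have hθ₀mem : θ₀ ∈ Set.Icc (0:ℝ) 1 := by
      rw [hθ₀]
      refine ⟨div_nonneg ha0 hc0.le, ?_⟩
      rw [div_le_one hc0, hc]
      linarith
    have hmem : ((fun θ : ℝ => ‖θ • v + (1 - θ) • u‖ ^ 2) θ₀) ∈ S := ⟨θ₀, hθ₀mem, rfl⟩
    have hval := hvalgen θ₀ hθ₀mem.1 hθ₀mem.2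
    have h1 : sInf S ≤ θ₀ ^ 2 * b ^ 2 + 2 * (θ₀ * (1 - θ₀) * t) + (1 - θ₀) ^ 2 * a ^ 2 :=
      hval ▸ csInf_le hbdd hmem
    have hexpr : θ₀ ^ 2 * b ^ 2 + 2 * (θ₀ * (1 - θ₀) * t) + (1 - θ₀) ^ 2 * a ^ 2
        = (2 * a ^ 2 * b ^ 2 + 2 * a * b * t) / c ^ 2 := by
      rw [hθ₀, hc]
      have hcne : a + b ≠ 0 := ne_of_gt (by linarith)
      field_simp
      ring
    have habt : 0 ≤ a * b + t := by
      have := (abs_le.mp hcs).1; linarith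
    have step1 : a ^ 2 + (a / b) * t ≤ a ^ 2 + χ * (a / b) * t := by
      have : (1 - χ) * (a / b) * (-t) ≥ 0 := by
        apply mul_nonneg (mul_nonneg (by linarith) (by positivity))
        linarith
      nlinarith
    have step2 : a * b * (a * b + t) / c ^ 2 ≤ a ^ 2 + (a / b) * t := by
      have h2 : a ^ 2 + (a / b) * t = a * (a * b + t) / b := by
        field_simp
      rw [h2, div_le_div_iff₀ (by positivity) hb0]
      have hbc : b ^ 2 ≤ c ^ 2 := by rw [hc]; nlinarith
      clear hvalgen hval h1 hmem hval0 hS hθ₀ hc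
      nlinarith [mul_nonneg (mul_nonneg ha0 habt) (sub_nonneg.mpr hbc)]
    have key : a ^ 2 + χ * (a / b) * t ≥
        (1 / 2) * (θ₀ ^ 2 * b ^ 2 + 2 * (θ₀ * (1 - θ₀) * t) + (1 - θ₀) ^ 2 * a ^ 2) := by
      rw [hexpr]
      have : (1 / 2) * ((2 * a ^ 2 * b ^ 2 + 2 * a * b * t) / c ^ 2)
          = a * b * (a * b + t) / c ^ 2 := by ring
      rw [this]
      linarith
    linarith
end

section
/- Let H be a real inner product space and u, v ∈ H with u ≠ 0, v ≠ 0, and ⟨u,v⟩ < 0. Then ‖u‖² − ⟨u,u−v⟩²/‖u−v‖² ≤ 2‖u‖²·(1 + ⟨u/‖u‖, v/‖v‖⟩). -/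
theorem stmt_2 {H : Type*} [NormedAddCommGroup H] [InnerProductSpace ℝ H]
    (u v : H) (hu : u ≠ 0) (hv : v ≠ 0) (huv : (inner ℝ u v : ℝ) < 0) :
    ‖u‖ ^ 2 - (inner ℝ u (u - v) : ℝ) ^ 2 / ‖u - v‖ ^ 2 ≤
      2 * ‖u‖ ^ 2 * (1 + (inner ℝ ((‖u‖)⁻¹ • u) ((‖v‖)⁻¹ • v) : ℝ)) := by
  set a := ‖u‖ with ha
  set b := ‖v‖ with hb
  set c : ℝ := inner ℝ u v with hc
  have ha0 : 0 < a := norm_pos_iff.mpr hu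
  have hb0 : 0 < b := norm_pos_iff.mpr hv
  have hcs : c ≤ a * b := real_inner_le_norm u v
  have hcs' : -(a * b) ≤ c := by
    have := abs_real_inner_le_norm u v
    rw [abs_le] at this
    exact this.1
  have h1 : (inner ℝ u (u - v) : ℝ) = a ^ 2 - c := by
    rw [inner_sub_right, real_inner_self_eq_norm_sq]
  have h2 : ‖u - v‖ ^ 2 = a ^ 2 + b ^ 2 - 2 * c := by
    rw [@norm_sub_sq_real]; ring
  have h3 : (inner ℝ ((‖u‖)⁻¹ • u) ((‖v‖)⁻¹ • v) : ℝ) = a⁻¹ * (b⁻¹ * c) := by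
    rw [real_inner_smul_left, real_inner_smul_right]
  rw [h1, h2, h3]
  have hd : 0 < a ^ 2 + b ^ 2 - 2 * c := by nlinarith
  rw [sub_le_comm, le_div_iff₀ hd]
  have hab : a⁻¹ * (b⁻¹ * c) = c / (a * b) := by
    field_simp
  rw [hab]
  have key : (2 * a ^ 2 * (1 + c / (a * b))) = 2 * a * (a * b + c) / b := by
    field_simp
  rw [key]
  have heq : a ^ 2 - 2 * a * (a * b + c) / b = (a ^ 2 * b - 2 * a * (a * b + c)) / b := by
    field_simp
  rw [heq, div_mul_eq_mul_div, div_le_iff₀ hb0]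
  have hs1 : (0:ℝ) ≤ a * b + c := by nlinarith
  have hs2 : (0:ℝ) ≤ 2 * a ^ 3 + a * b ^ 2 + b * c - 4 * a * c := by nlinarith
  nlinarith [mul_nonneg hs1 hs2]
end

section
/- Let β : [0,1] → ℝ be C¹ with β_ ≤ β(t) ≤ β̄ for positive constants β_ ≤ β̄, let y : [0,1] → ℝ be C² with ‖y‖_∞ ≤ s₀, and suppose that on an interval [t₀,t₁] ⊆ [0,1] one has y' ≥ 0 and the differential inequality ((β·y')(t))' − ((a+b)/2)·β(t)·y'(t)² ≤ (a/2)·c⁺ for constants a, b > 0 and c⁺ ≥ 0. If y'(t₀)² ≤ D², then y'(t₁)² ≤ ( (a/(a+b))·(β̄/β_²)·c⁺ + (β̄²/β_²)·D² )·e^{2(a+b)s₀}. -/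
set_option maxHeartbeats 1000000 in
theorem stmt_6 (β y : ℝ → ℝ) (βlow βbar a b cplus s₀ D t₀ t₁ : ℝ)
    (hβ : ContDiff ℝ 1 β) (hy : ContDiff ℝ 2 y)
    (hβlow : 0 < βlow) (hββ : βlow ≤ βbar)
    (hβbounds : ∀ t ∈ Set.Icc (0:ℝ) 1, βlow ≤ β t ∧ β t ≤ βbar)
    (ha : 0 < a) (hb : 0 < b) (hc : 0 ≤ cplus) (hs₀ : 0 < s₀)
    (hysup : ∀ t ∈ Set.Icc (0:ℝ) 1, |y t| ≤ s₀)
    (ht₀ : t₀ ∈ Set.Icc (0:ℝ) 1) (ht₁ : t₁ ∈ Set.Icc (0:ℝ) 1) (ht : t₀ ≤ t₁)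
    (hmono : ∀ t ∈ Set.Icc t₀ t₁, 0 ≤ deriv y t)
    (hineq : ∀ t ∈ Set.Icc t₀ t₁,
      deriv (fun s => β s * deriv y s) t - ((a + b) / 2) * β t * (deriv y t) ^ 2 ≤
        (a / 2) * cplus)
    (hD : (deriv y t₀) ^ 2 ≤ D ^ 2) :
    (deriv y t₁) ^ 2 ≤
      ((a / (a + b)) * (βbar / βlow ^ 2) * cplus + (βbar ^ 2 / βlow ^ 2) * D ^ 2) *
        Real.exp (2 * (a + b) * s₀) := by
  have hab : 0 < a + b := by linarith
  set u := deriv y with hu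
  have hy2 : ContDiff ℝ (1+1) y := by exact_mod_cast hy
  have hy' := contDiff_succ_iff_deriv.mp hy2
  have hyd : Differentiable ℝ y := hy'.1
  have hud : Differentiable ℝ u := hy'.2.2.differentiable one_ne_zero
  have hβd : Differentiable ℝ β := hβ.differentiable one_ne_zero
  have hβbar : 0 < βbar := lt_of_lt_of_le hβlow hββ
  set K := a / (a + b) * cplus * βbar with hK
  have hKnn : 0 ≤ K := by positivity
  have hKab : (a + b) * K = a * cplus * βbar := by
    rw [hK]; field_simp
  set E : ℝ → ℝ := fun t => Real.exp (-((a + b) * y t)) with hE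
  set H : ℝ → ℝ := fun t => ((β t * u t) ^ 2 + K) * E t with hH
  -- derivative of H
  have hφ : ∀ t, HasDerivAt (fun s => β s * u s)
      (deriv β t * u t + β t * deriv u t) t := fun t =>
    ((hβd t).hasDerivAt).mul ((hud t).hasDerivAt)
  have hEd : ∀ t, HasDerivAt E (E t * (-((a + b) * u t))) t := fun t => by
    have : HasDerivAt (fun s => -((a + b) * y s)) (-((a + b) * u t)) t :=
      (((hyd t).hasDerivAt).const_mul (a + b)).neg
    exact this.exp
  have hHd : ∀ t, HasDerivAt H
      ((2 * (β t * u t) ^ 1 * (deriv β t * u t + β t * deriv u t)) * E t +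
        ((β t * u t) ^ 2 + K) * (E t * (-((a + b) * u t)))) t := fun t =>
    (((hφ t).pow 2).add_const K).mul (hEd t)
  -- H is antitone on [t₀, t₁]
  have hsub : Set.Icc t₀ t₁ ⊆ Set.Icc (0:ℝ) 1 :=
    Set.Icc_subset_Icc ht₀.1 ht₁.2
  have hmono' : AntitoneOn H (Set.Icc t₀ t₁) := by
    apply antitoneOn_of_deriv_nonpos (convex_Icc t₀ t₁)
    · exact fun t _ => (hHd t).continuousAt.continuousWithinAt
    · exact fun t _ => ((hHd t).differentiableAt).differentiableWithinAt
    · intro t htmem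
      rw [interior_Icc] at htmem
      have htIcc : t ∈ Set.Icc t₀ t₁ := Set.Ioo_subset_Icc_self htmem
      have hun : 0 ≤ u t := hmono t htIcc
      have hβt := hβbounds t (hsub htIcc)
      have hβp : 0 < β t := lt_of_lt_of_le hβlow hβt.1
      have hEp : 0 < E t := Real.exp_pos _
      have hineqt := hineq t htIcc
      have hder : deriv (fun s => β s * u s) t =
          deriv β t * u t + β t * deriv u t := (hφ t).deriv
      rw [hder] at hineqt
      rw [(hHd t).deriv]
      have key : 2 * (β t * u t) * (deriv β t * u t + β t * deriv u t) ≤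
          2 * (β t * u t) * ((a / 2) * cplus + ((a + b) / 2) * β t * (u t) ^ 2) := by
        apply mul_le_mul_of_nonneg_left _ (by positivity)
        linarith
      have hββ' : β t ≤ βbar := hβt.2
      have hX : 2 * (β t * u t) * (deriv β t * u t + β t * deriv u t) -
          (a + b) * u t * ((β t * u t) ^ 2 + K) ≤ 0 := by
        nlinarith [mul_nonneg (mul_nonneg (mul_nonneg ha.le hc) hun)
          (sub_nonneg.mpr hββ')]
      calc 2 * (β t * u t) ^ 1 * (deriv β t * u t + β t * deriv u t) * E t +
            ((β t * u t) ^ 2 + K) * (E t * -((a + b) * u t))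
          = E t * (2 * (β t * u t) * (deriv β t * u t + β t * deriv u t) -
            (a + b) * u t * ((β t * u t) ^ 2 + K)) := by ring
        _ ≤ 0 := mul_nonpos_of_nonneg_of_nonpos hEp.le hX
  have hHle : H t₁ ≤ H t₀ :=
    hmono' (Set.left_mem_Icc.mpr ht) (Set.right_mem_Icc.mpr ht) ht
  -- exp bounds
  set Ep := Real.exp ((a + b) * s₀) with hEpdef
  set Em := Real.exp (-((a + b) * s₀)) with hEmdef
  have hEmEp : Em * Ep = 1 := by
    rw [hEmdef, hEpdef, ← Real.exp_add]; simp
  have hEbounds : ∀ t ∈ Set.Icc (0:ℝ) 1, Em ≤ E t ∧ E t ≤ Ep := by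
    intro t htm
    have := abs_le.mp (hysup t htm)
    constructor
    · exact Real.exp_le_exp.mpr (by nlinarith [this.2])
    · exact Real.exp_le_exp.mpr (by nlinarith [this.1])
  have hβ1 := hβbounds t₁ ht₁
  have hβ0 := hβbounds t₀ ht₀
  have hE1 := hEbounds t₁ ht₁
  have hE0 := hEbounds t₀ ht₀
  have hu1 : 0 ≤ u t₁ := hmono t₁ (Set.right_mem_Icc.mpr ht)
  -- lower bound for H t₁
  have hlow : βlow ^ 2 * (u t₁) ^ 2 * Em ≤ H t₁ := by
    have h1 : βlow ^ 2 * (u t₁) ^ 2 ≤ (β t₁ * u t₁) ^ 2 := by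
      have hsq : βlow ^ 2 ≤ (β t₁) ^ 2 := by nlinarith [hβ1.1]
      calc βlow ^ 2 * (u t₁) ^ 2 ≤ (β t₁) ^ 2 * (u t₁) ^ 2 :=
            mul_le_mul_of_nonneg_right hsq (sq_nonneg _)
        _ = (β t₁ * u t₁) ^ 2 := (mul_pow _ _ _).symm
    have hEm0 : 0 < Em := Real.exp_pos _
    have hE10 : 0 < E t₁ := Real.exp_pos _
    calc βlow ^ 2 * (u t₁) ^ 2 * Em ≤ (β t₁ * u t₁) ^ 2 * E t₁ := by
          apply mul_le_mul h1 hE1.1 hEm0.le (by positivity)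
      _ ≤ H t₁ := by
          simp only [hH]
          nlinarith [mul_nonneg hKnn hE10.le]
  -- upper bound for H t₀
  have hhigh : H t₀ ≤ (βbar ^ 2 * D ^ 2 + K) * Ep := by
    have h2 : (β t₀ * u t₀) ^ 2 ≤ βbar ^ 2 * D ^ 2 := by
      have hβ0p : 0 ≤ β t₀ := le_trans hβlow.le hβ0.1
      have hsq : (β t₀) ^ 2 ≤ βbar ^ 2 := by nlinarith [hβ0.2]
      calc (β t₀ * u t₀) ^ 2 = (β t₀) ^ 2 * (u t₀) ^ 2 := mul_pow _ _ _
        _ ≤ βbar ^ 2 * (u t₀) ^ 2 := mul_le_mul_of_nonneg_right hsq (sq_nonneg _)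
        _ ≤ βbar ^ 2 * D ^ 2 := mul_le_mul_of_nonneg_left hD (by positivity)
    have hE00 : 0 < E t₀ := Real.exp_pos _
    have hEp0 : 0 < Ep := Real.exp_pos _
    calc H t₀ = ((β t₀ * u t₀) ^ 2 + K) * E t₀ := rfl
      _ ≤ (βbar ^ 2 * D ^ 2 + K) * Ep := by
          apply mul_le_mul (by linarith) hE0.2 hE00.le (by positivity)
  have hchain : βlow ^ 2 * (u t₁) ^ 2 * Em ≤ (βbar ^ 2 * D ^ 2 + K) * Ep :=
    le_trans hlow (le_trans hHle hhigh)
  -- conclafter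
  have hgoalrw : ((a / (a + b)) * (βbar / βlow ^ 2) * cplus + (βbar ^ 2 / βlow ^ 2) * D ^ 2) *
        Real.exp (2 * (a + b) * s₀) = (βbar ^ 2 * D ^ 2 + K) * Ep * Ep / βlow ^ 2 := by
    have : Real.exp (2 * (a + b) * s₀) = Ep * Ep := by
      rw [hEpdef, ← Real.exp_add]; ring_nf
    rw [this, hK]
    field_simp
    ring
  rw [hgoalrw, le_div_iff₀ (by positivity)]
  have hEp0 : 0 < Ep := Real.exp_pos _
  calc u t₁ ^ 2 * βlow ^ 2 = βlow ^ 2 * (u t₁) ^ 2 * Em * Ep := by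
        rw [mul_assoc (βlow ^ 2 * (u t₁) ^ 2), hEmEp]; ring
    _ ≤ (βbar ^ 2 * D ^ 2 + K) * Ep * Ep :=
        mul_le_mul_of_nonneg_right hchain hEp0.le
end

section
/- Let f : [0,1] → ℝ be continuous with f(0) = y₀ and f(1) = y₁, differentiable on (0,1). Then, possibly after replacing f(t) by f(1−t), there exist t₀ ≤ t₁ in [0,1] such that |f'| attains its maximum over the points where f is differentiable at t₁, f' does not change sign on [t₀,t₁], and f'(t₀) equals 0 or y₁ − y₀. -/
private lemma sign_aux (φ : ℝ → ℝ) (hφ : Continuous φ) (a b : ℝ) (hab : a ≤ b)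
    (hb : 0 ≤ φ b) :
    ∃ t₀, a ≤ t₀ ∧ t₀ ≤ b ∧ (∀ t ∈ Set.Icc t₀ b, 0 ≤ φ t) ∧ (φ t₀ = 0 ∨ t₀ = a) := by
  set S : Set ℝ := Set.Icc a b ∩ φ ⁻¹' Set.Iic 0 with hS
  by_cases hne : S.Nonempty
  · have hScpt : IsCompact S := isCompact_Icc.inter_right (isClosed_Iic.preimage hφ)
    set t₀ := sSup S with ht₀
    have hmem : t₀ ∈ S := hScpt.sSup_mem hne
    have ht₀ab : t₀ ∈ Set.Icc a b := hmem.1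
    have ht₀le : φ t₀ ≤ 0 := hmem.2
    have hub : ∀ t ∈ S, t ≤ t₀ := fun t ht => le_csSup hScpt.bddAbove ht
    -- φ t₀ = 0
    have hzero : φ t₀ = 0 := by
      rcases eq_or_lt_of_le ht₀ab.2 with heq | hlt
      · linarith [heq ▸ hb]
      · -- t₀ < b : φ > 0 on (t₀, b], so by continuity φ t₀ ≥ 0
        have hpos : ∀ t, t₀ < t → t ≤ b → 0 < φ t := by
          intro t h1 h2
          by_contra h
          push_neg at h
          have : t ∈ S := ⟨⟨le_trans ht₀ab.1 h1.le, h2⟩, h⟩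
          exact absurd (hub t this) (not_le.mpr h1)
        have hge : 0 ≤ φ t₀ := by
          haveI := left_nhdsWithin_Ioo_neBot hlt
          have htend : Filter.Tendsto φ (nhdsWithin t₀ (Set.Ioo t₀ b)) (nhds (φ t₀)) :=
            (hφ.continuousAt).continuousWithinAt.tendsto
          refine ge_of_tendsto htend ?_
          filter_upwards [self_mem_nhdsWithin] with t ht
          exact (hpos t ht.1 ht.2.le).le
        linarith
    refine ⟨t₀, ht₀ab.1, ht₀ab.2, ?_, Or.inl hzero⟩
    intro t ht
    by_contra h
    push_neg at h
    have : t ∈ S := ⟨⟨le_trans ht₀ab.1 ht.1, ht.2⟩, h.le⟩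
    have := hub t this
    have : t = t₀ := le_antisymm this ht.1
    rw [this, hzero] at h
    exact lt_irrefl 0 h
  · refine ⟨a, le_refl a, hab, ?_, Or.inr rfl⟩
    intro t ht
    by_contra h
    push_neg at h
    exact hne ⟨t, ht, h.le⟩

theorem stmt_7 (f : ℝ → ℝ) (y₀ y₁ : ℝ) (hf : ContDiff ℝ 1 f)
    (hf0 : f 0 = y₀) (hf1 : f 1 = y₁) :
    ∃ g : ℝ → ℝ, (g = f ∨ g = fun t => f (1 - t)) ∧
      ∃ t₀ t₁, t₀ ∈ Set.Icc (0:ℝ) 1 ∧ t₁ ∈ Set.Icc (0:ℝ) 1 ∧ t₀ ≤ t₁ ∧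
        (∀ t ∈ Set.Icc (0:ℝ) 1, |deriv g t| ≤ |deriv g t₁|) ∧
        ((∀ t ∈ Set.Icc t₀ t₁, 0 ≤ deriv g t) ∨ (∀ t ∈ Set.Icc t₀ t₁, deriv g t ≤ 0)) ∧
        (deriv g t₀ = 0 ∨ |deriv g t₀| = |y₁ - y₀|) := by
  have hdiff : Differentiable ℝ f := hf.differentiable one_ne_zero
  have hcont : Continuous (deriv f) := hf.continuous_deriv le_rfl
  -- max point of |deriv f| on [0,1]
  obtain ⟨m, hm01, hmmax⟩ := isCompact_Icc.exists_isMaxOn (Set.nonempty_Icc.mpr zero_le_one)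
    ((hcont.abs).continuousOn : ContinuousOn (fun t => |deriv f t|) (Set.Icc 0 1))
  -- MVT point
  obtain ⟨c, hc01, hcd⟩ := exists_deriv_eq_slope f (zero_lt_one) hdiff.continuous.continuousOn
    (hdiff.differentiableOn)
  rw [hf0, hf1] at hcd
  simp only [sub_zero, div_one] at hcd
  -- deriv of the reflection
  have hrefl : ∀ t, deriv (fun t => f (1 - t)) t = -(deriv f (1 - t)) := by
    intro t
    have h1 : HasDerivAt (fun t : ℝ => 1 - t) (-1) t := by
      simpa using (hasDerivAt_id' t).const_sub (1:ℝ)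
    have h2 : HasDerivAt (fun t => f (1 - t)) (deriv f (1 - t) * (-1)) t :=
      (hdiff (1 - t)).hasDerivAt.comp t h1
    simpa using h2.deriv
  rcases le_or_gt c m with hcm | hmc
  · -- g = f, work on [c, m]
    refine ⟨f, Or.inl rfl, ?_⟩
    rcases le_or_gt 0 (deriv f m) with hsgn | hsgn
    · obtain ⟨t₀, h1, h2, h3, h4⟩ := sign_aux (deriv f) hcont c m hcm hsgn
      refine ⟨t₀, m, ⟨le_trans hc01.1.le h1, le_trans h2 hm01.2⟩, hm01, h2,
        fun t ht => hmmax ht, Or.inl h3, ?_⟩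
      rcases h4 with h | h
      · exact Or.inl h
      · exact Or.inr (by rw [h, hcd])
    · obtain ⟨t₀, h1, h2, h3, h4⟩ := sign_aux (fun t => -(deriv f t)) (hcont.neg) c m hcm
        (by simpa using hsgn.le)
      refine ⟨t₀, m, ⟨le_trans hc01.1.le h1, le_trans h2 hm01.2⟩, hm01, h2,
        fun t ht => hmmax ht, Or.inr fun t ht => by linarith [h3 t ht], ?_⟩
      rcases h4 with h | h
      · exact Or.inl (by linarith [h])
      · exact Or.inr (by rw [h, hcd])
  · -- g = reflection, work on [1-c, 1-m]
    refine ⟨fun t => f (1 - t), Or.inr rfl, ?_⟩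
    set g := fun t => f (1 - t) with hg
    have hgc : Continuous (deriv g) := by
      have : deriv g = fun t => -(deriv f (1 - t)) := funext hrefl
      rw [this]
      exact (hcont.comp (continuous_const.sub continuous_id)).neg
    have hab : (1 - c : ℝ) ≤ 1 - m := by linarith
    have habs : ∀ t, |deriv g t| = |deriv f (1 - t)| := fun t => by rw [hrefl t, abs_neg]
    have hmaxg : ∀ t ∈ Set.Icc (0:ℝ) 1, |deriv g t| ≤ |deriv g (1 - m)| := by
      intro t ht
      rw [habs, habs]
      have h1t : (1 - t) ∈ Set.Icc (0:ℝ) 1 := ⟨by linarith [ht.2], by linarith [ht.1]⟩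
      have : |deriv f (1 - (1 - m))| = |deriv f m| := by norm_num
      rw [this]
      exact hmmax h1t
    have h1m01 : (1 - m : ℝ) ∈ Set.Icc (0:ℝ) 1 := ⟨by linarith [hm01.2], by linarith [hm01.1]⟩
    have hgderiv_c : |deriv g (1 - c)| = |y₁ - y₀| := by
      rw [habs]
      have : (1 - (1 - c) : ℝ) = c := by ring
      rw [this, hcd]
    rcases le_or_gt 0 (deriv g (1 - m)) with hsgn | hsgn
    · obtain ⟨t₀, h1, h2, h3, h4⟩ := sign_aux (deriv g) hgc (1 - c) (1 - m) hab hsgn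
      refine ⟨t₀, 1 - m, ⟨by linarith [hc01.2, h1], le_trans h2 h1m01.2⟩, h1m01, h2,
        hmaxg, Or.inl h3, ?_⟩
      rcases h4 with h | h
      · exact Or.inl h
      · exact Or.inr (h ▸ hgderiv_c)
    · obtain ⟨t₀, h1, h2, h3, h4⟩ := sign_aux (fun t => -(deriv g t)) (hgc.neg) (1 - c) (1 - m)
        hab (by simpa using hsgn.le)
      refine ⟨t₀, 1 - m, ⟨by linarith [hc01.2, h1], le_trans h2 h1m01.2⟩, h1m01, h2,
        hmaxg, Or.inr fun t ht => by linarith [h3 t ht], ?_⟩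
      rcases h4 with h | h
      · exact Or.inl (by linarith [h])
      · exact Or.inr (h ▸ hgderiv_c)
end

section
/- Let c₀, c, p₁, q₁, λ, β̄ be real numbers with p₁ > 0, q₁ ≥ 0, λ = 2/p₁, β̄ > 0, and suppose E₀, E_λ, y are real numbers satisfying: E_λ = E₀ − (λ−μ)/2 · y for some μ ∈ [0,λ], with y ≥ 0; moreover if E₀ ≤ 0 then E₀ ≥ −(β̄+μ)q₁/2 and y ≤ q₁, and if E₀ > 0 then y ≤ p₁E₀ + q₁. Then E_λ ≥ −(β̄+λ)q₁/2. -/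
theorem stmt_9 (c₀ p₁ q₁ lam βbar μ E₀ Elam y : ℝ)
    (hp₁ : 0 < p₁) (hq₁ : 0 ≤ q₁) (hlam : lam = 2 / p₁) (hβbar : 0 < βbar)
    (hμ : μ ∈ Set.Icc 0 lam) (hy : 0 ≤ y)
    (hE : Elam = E₀ - (lam - μ) / 2 * y)
    (hneg : E₀ ≤ 0 → E₀ ≥ -(βbar + μ) * q₁ / 2 ∧ y ≤ q₁)
    (hpos : 0 < E₀ → y ≤ p₁ * E₀ + q₁) :
    Elam ≥ -(βbar + lam) * q₁ / 2 := by
  obtain ⟨hμ0, hμl⟩ := hμ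
  have hlp : lam * p₁ = 2 := by rw [hlam]; field_simp [hp₁.ne']
  rcases le_or_gt E₀ 0 with h | h
  · obtain ⟨h1, h2⟩ := hneg h
    nlinarith [mul_nonneg (sub_nonneg.2 hμl) hy, mul_nonneg (sub_nonneg.2 hμl) (sub_nonneg.2 h2)]
  · have hb := hpos h
    nlinarith [mul_nonneg hμ0 h.le, mul_nonneg (mul_nonneg hμ0 h.le) hp₁.le,
      mul_nonneg (sub_nonneg.2 hμl) hq₁]
end
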